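/- arXiv:2102.09132 — 4 statements merged into one kernel-verified Lean document; each statement's English description precedes it below -/
import Mathlib

section
/- A market equilibrium (x*, p*, τ*) exists if and only if the linear program (LP) has an optimal solution all of whose entries lie in {0,1}. -/
open Classical
noncomputable section

/-- Data of the autonomous carpooling market of Ostrovsky–Schwarz:
an abstract finite edge set `E` with integer capacities and positive travel times,
a finite route set `R` (each route given by its finite set of edges),
a finite set of riders `M`, a car capacity `A`, and rider preference parameters
`α` (value of arriving), `β` (value of time), `γ` (carpool disutility, depending on
group size) and a per-rider per-unit-time operation cost `δ`. -/
structure CarpoolMarket where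
  /-- edges of the network -/
  E : Type
  /-- routes of the network (origin–destination paths) -/
  R : Type
  /-- riders -/
  M : Type
  [fintypeE : Fintype E]
  [fintypeR : Fintype R]
  [fintypeM : Fintype M]
  [decEqM : DecidableEq M]
  /-- integer edge capacities `q_e ≥ 1` -/
  q : E → ℕ
  q_pos : ∀ e, 1 ≤ q e
  /-- edge travel times `t_e > 0` -/
  t : E → ℝ
  t_pos : ∀ e, 0 < t e
  /-- the (finite) set of edges of each route -/
  edges : R → Finset E
  /-- car capacity -/
  A : ℕ
  A_pos : 1 ≤ A
  /-- value of arriving at the destination -/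
  α : M → ℝ
  /-- value of time -/
  β : M → ℝ
  /-- carpool disutility of rider `m` for a group of size `d`, per unit travel time -/
  γ : M → ℕ → ℝ
  γ_nonneg : ∀ m d, 1 ≤ d → d ≤ A → 0 ≤ γ m d
  γ_one : ∀ m, γ m 1 = 0
  /-- the marginal disutility `γ(d) - γ(d-1)` is nondecreasing in `d` -/
  γ_incr : ∀ m d, 2 ≤ d → d < A → γ m d - γ m (d - 1) ≤ γ m (d + 1) - γ m d
  /-- cost of driving one rider for one unit of travel time -/
  δ : ℝ
  δ_nonneg : 0 ≤ δ

attribute [instance] CarpoolMarket.fintypeE CarpoolMarket.fintypeR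
  CarpoolMarket.fintypeM CarpoolMarket.decEqM

namespace CarpoolMarket

variable (c : CarpoolMarket)

/-- travel time of a route: the sum of travel times of its edges -/
def routeTime (r : c.R) : ℝ := ∑ e ∈ c.edges r, c.t e

/-- the set `B` of feasible rider groups: nonempty subsets of riders of size at most `A` -/
def Groups : Finset (Finset c.M) :=
  Finset.univ.filter fun b => b.Nonempty ∧ b.card ≤ c.A

/-- rider `m`'s value `v_r^m(b)` of the trip `(b, r)` -/
def riderValue (m : c.M) (b : Finset c.M) (r : c.R) : ℝ :=
  c.α m - c.β m * c.routeTime r - c.γ m b.card * c.routeTime r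

/-- cost `c_r(b) = δ |b| t_r` of the trip `(b, r)` -/
def tripCost (b : Finset c.M) (r : c.R) : ℝ := c.δ * (b.card : ℝ) * c.routeTime r

/-- social value `V_r(b)` of the trip `(b, r)` -/
def V (b : Finset c.M) (r : c.R) : ℝ :=
  (∑ m ∈ b, c.riderValue m b r) - c.tripCost b r

/-- load that a (fractional) trip vector `x` places on edge `e` -/
def edgeLoad (x : Finset c.M → c.R → ℝ) (e : c.E) : ℝ :=
  ∑ r ∈ Finset.univ.filter (fun r => e ∈ c.edges r), ∑ b ∈ c.Groups, x b r

/-- feasible solutions of the linear-programming relaxation (LP) -/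
def LPFeasible (x : Finset c.M → c.R → ℝ) : Prop :=
  (∀ b r, 0 ≤ x b r) ∧
  (∀ b r, b ∉ c.Groups → x b r = 0) ∧
  (∀ m : c.M, (∑ r : c.R, ∑ b ∈ c.Groups.filter (fun b => m ∈ b), x b r) ≤ 1) ∧
  (∀ e : c.E, c.edgeLoad x e ≤ (c.q e : ℝ))

/-- social welfare `S(x) = ∑_{b,r} V_r(b) x_r(b)` -/
def welfare (x : Finset c.M → c.R → ℝ) : ℝ :=
  ∑ b ∈ c.Groups, ∑ r : c.R, c.V b r * x b r

/-- a vector has all its entries in `{0,1}` -/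
def IsBinary (x : Finset c.M → c.R → ℝ) : Prop := ∀ b r, x b r = 0 ∨ x b r = 1

/-- optimal solutions of (LP) -/
def LPOptimal (x : Finset c.M → c.R → ℝ) : Prop :=
  c.LPFeasible x ∧ ∀ y, c.LPFeasible y → c.welfare y ≤ c.welfare x

/-- feasible `{0,1}`-valued trip vectors -/
def TripFeasible (x : Finset c.M → c.R → ℝ) : Prop :=
  c.IsBinary x ∧ c.LPFeasible x

/-- utility of rider `m` under the outcome `(x, p)`:
`u^m = ∑_r ∑_{b ∋ m} v_r^m(b) x_r(b) - p^m` -/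
def utility (x : Finset c.M → c.R → ℝ) (p : c.M → ℝ) (m : c.M) : ℝ :=
  (∑ r : c.R, ∑ b ∈ c.Groups.filter (fun b => m ∈ b), c.riderValue m b r * x b r) - p m

/-- total toll collected on a route -/
def routeToll (τ : c.E → ℝ) (r : c.R) : ℝ := ∑ e ∈ c.edges r, τ e

/-- A market equilibrium: a feasible `{0,1}` trip vector, payments and nonnegative tolls
satisfying individual rationality, stability, budget balance and market clearing. -/
def IsEquilibrium (x : Finset c.M → c.R → ℝ) (p : c.M → ℝ) (τ : c.E → ℝ) : Prop :=
  c.TripFeasible x ∧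
  (∀ e, 0 ≤ τ e) ∧
  -- individual rationality
  (∀ m, 0 ≤ c.utility x p m) ∧
  -- stability
  (∀ b ∈ c.Groups, ∀ r : c.R,
      c.V b r - c.routeToll τ r ≤ ∑ m ∈ b, c.utility x p m) ∧
  -- budget balance for organized trips
  (∀ b ∈ c.Groups, ∀ r : c.R, x b r = 1 →
      ∑ m ∈ b, p m = c.routeToll τ r + c.tripCost b r) ∧
  -- riders belonging to no organized trip pay nothing
  (∀ m : c.M, (∀ b r, m ∈ b → x b r = 0) → p m = 0) ∧
  -- market clearing
  (∀ e : c.E, c.edgeLoad x e < (c.q e : ℝ) → τ e = 0)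

end CarpoolMarket

/-!
An equilibrium is the same thing as a binary feasible `x` together with a dual solution of (LP)
in complementary slackness with it: the dual variables are the riders' utilities `u` and the
tolls `τ`, stability is dual feasibility, and budget balance, the free-rider condition and market
clearing are complementary slackness (payments being recovered as `p = v - u`). So an equilibrium
certifies optimality of `x` by weak duality, and conversely strong duality supplies the prices for
a binary optimum. Strong duality comes from Farkas' lemma, i.e. from separating a point from a
finitely generated cone, which is closed by Carathéodory's argument.
-/

open Matrix

section Cone

variable {ι E : Type*} [Fintype ι] [AddCommGroup E] [Module ℝ E]

theorem exists_nonneg_linearIndepOn_support (v : ι → E) {c : ι → ℝ} (hc : 0 ≤ c) :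
    ∃ c' : ι → ℝ, 0 ≤ c' ∧ LinearIndepOn ℝ v (Function.support c') ∧
      Fintype.linearCombination ℝ v c' = Fintype.linearCombination ℝ v c := by
  induction hn : (Finset.univ.filter (c · ≠ 0)).card using Nat.strong_induction_on
    generalizing c with
  | _ n ih =>
  set s := Finset.univ.filter (c · ≠ 0)
  by_cases hli : LinearIndepOn ℝ v (s : Set ι)
  · exact ⟨c, hc, by simpa [s, Function.support] using hli, rfl⟩
  -- Subtract the largest multiple of a dependency `ν` that keeps the coefficients nonnegative:
  -- this kills the coefficient at `i₀`.
  obtain ⟨μ, hμ, j, hj, hμj⟩ := not_linearIndepOn_finset_iff.1 hli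
  set ν : ι → ℝ := fun i => if i ∈ s then μ i / μ j else 0
  have hν : Fintype.linearCombination ℝ v ν = 0 := by
    simp only [Fintype.linearCombination_apply, ν, ite_smul, zero_smul, Finset.sum_ite_mem,
      Finset.univ_inter, div_eq_inv_mul, mul_smul, ← Finset.smul_sum, hμ, smul_zero]
  have hνs : ∀ i, ν i ≠ 0 → i ∈ s := fun i hi => by by_contra h; simp [ν, h] at hi
  obtain ⟨i₀, hi₀, hmin⟩ := (s.filter (0 < ν ·)).exists_min_image (fun i => c i / ν i)
    ⟨j, by simp [ν, hj, hμj]⟩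
  rw [Finset.mem_filter] at hi₀
  set t := c i₀ / ν i₀
  have ht : 0 ≤ t := div_nonneg (hc i₀) hi₀.2.le
  have hc' : 0 ≤ c - t • ν := fun i => by
    rcases lt_or_ge 0 (ν i) with hνi | hνi
    · simpa [le_div_iff₀ hνi] using hmin i (Finset.mem_filter.2 ⟨hνs i hνi.ne', hνi⟩)
    · simpa using (mul_nonpos_of_nonneg_of_nonpos ht hνi).trans (hc i)
  have hsupp : Finset.univ.filter ((c - t • ν) · ≠ 0) ⊆ s.erase i₀ := fun i hi => by
    simp only [Finset.mem_filter, Finset.mem_univ, true_and] at hi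
    refine Finset.mem_erase.2 ⟨fun h => hi ?_, ?_⟩
    · simp [h, t, div_mul_cancel₀ _ hi₀.2.ne']
    · by_contra hi'
      have : ν i = 0 := by simp [ν, hi']
      simp_all [s]
  obtain ⟨c', hc'0, hli', hc'L⟩ :=
    ih _ (hn ▸ (Finset.card_le_card hsupp).trans_lt (Finset.card_erase_lt_of_mem hi₀.1)) hc' rfl
  exact ⟨c', hc'0, hli', by rw [hc'L, map_sub, map_smul, hν, smul_zero, sub_zero]⟩

variable [TopologicalSpace E] [IsTopologicalAddGroup E] [ContinuousSMul ℝ E] [T2Space E]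

theorem isClosed_positive_map_linearCombination (v : ι → E) :
    IsClosed ((PointedCone.positive ℝ (ι → ℝ)).map (Fintype.linearCombination ℝ v) : Set E) := by
  have hcone : ((PointedCone.positive ℝ (ι → ℝ)).map (Fintype.linearCombination ℝ v) : Set E) =
      ⋃ (S : Set ι) (_ : LinearIndepOn ℝ v S),
        Fintype.linearCombination ℝ (fun i : S => v i) '' Set.Ici 0 := by
    ext x
    simp only [PointedCone.coe_map, Set.mem_image, SetLike.mem_coe, PointedCone.mem_positive,
      Set.mem_iUnion, Set.mem_Ici, exists_prop]
    constructor
    · rintro ⟨c, hc, rfl⟩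
      obtain ⟨c', hc', hli, hL⟩ := exists_nonneg_linearIndepOn_support v hc
      refine ⟨_, hli, fun i => c' i, fun i => hc' i, ?_⟩
      rw [← hL, Fintype.linearCombination_apply, Fintype.linearCombination_apply,
        Finset.sum_set_coe (f := fun i => c' i • v i)]
      exact Fintype.sum_subset fun i hi => by simpa using left_ne_zero_of_smul hi
    · rintro ⟨S, -, d, hd, rfl⟩
      refine ⟨fun i => if h : i ∈ S then d ⟨i, h⟩ else 0, fun i => ?_, ?_⟩
      · dsimp only
        split_ifs
        exacts [hd _, le_rfl]
      rw [Fintype.linearCombination_apply, Fintype.linearCombination_apply,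
        ← Fintype.sum_subset (s := S.toFinset) fun i hi => by by_contra hiS; simp_all,
        ← Finset.sum_set_coe (f := fun i => (if h : i ∈ S then d ⟨i, h⟩ else 0) • v i)]
      simp
  rw [hcone]
  exact isClosed_iUnion_of_finite fun S => isClosed_iUnion_of_finite fun hS =>
    (LinearMap.isClosedEmbedding_of_injective (LinearMap.ker_eq_bot.2
      hS.fintypeLinearCombination_injective)).isClosedMap _ isClosed_Ici

variable [LocallyConvexSpace ℝ E]

theorem exists_separating_of_notMem_positive_map (v : ι → E) {d : E}
    (hd : d ∉ (PointedCone.positive ℝ (ι → ℝ)).map (Fintype.linearCombination ℝ v)) :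
    ∃ f : StrongDual ℝ E, (∀ i, 0 ≤ f (v i)) ∧ f d < 0 := by
  obtain ⟨f, hf, hfd⟩ := ProperCone.hyperplane_separation_point
    ⟨_, isClosed_positive_map_linearCombination v⟩ hd
  refine ⟨f, fun i => hf _ ⟨Pi.single i 1, ?_, ?_⟩, hfd⟩
  · simp [Pi.single_nonneg]
  · simp

end Cone

section LinearProgramming

variable {ι κ : Type*} [Fintype ι] [Fintype κ]

theorem exists_le_vecMul_or_exists_mulVec_nonpos (P : Matrix κ ι ℝ) (d : ι → ℝ) :
    (∃ y, 0 ≤ y ∧ d ≤ y ᵥ* P) ∨ ∃ z, 0 ≤ z ∧ P *ᵥ z ≤ 0 ∧ 0 < d ⬝ᵥ z := by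
  let v : κ ⊕ ι → ι → ℝ := Sum.elim (fun k => P k) fun i => -Pi.single i 1
  by_cases hd : d ∈ (PointedCone.positive ℝ (κ ⊕ ι → ℝ)).map (Fintype.linearCombination ℝ v)
  · obtain ⟨w, hw, rfl⟩ := hd
    refine .inl ⟨w ∘ Sum.inl, fun k => hw (.inl k), fun i => ?_⟩
    simpa [v, Fintype.linearCombination_apply, Fintype.sum_sum_type, vecMul_eq_sum,
      Pi.single_apply] using hw (.inr i)
  · obtain ⟨f, hfv, hfd⟩ := exists_separating_of_notMem_positive_map v hd
    set w : ι → ℝ := fun i => f (Pi.single i 1)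
    have hf : ∀ x, f x = w ⬝ᵥ x := fun x =>
      LinearMap.congr_fun ((dotProductEquiv ℝ ι).apply_symm_apply f.toLinearMap).symm x
    refine .inr ⟨-w, fun i => by simpa [v, w] using hfv (.inr i), fun k => ?_, ?_⟩
    · simpa [v, hf, mulVec, dotProduct_comm] using hfv (.inl k)
    · simpa [hf, dotProduct_comm] using hfd

variable {A : Matrix κ ι ℝ} {b : κ → ℝ} {c : ι → ℝ} {x : ι → ℝ} {y : κ → ℝ}

theorem dotProduct_le_dotProduct_of_feasible (hx : 0 ≤ x) (hAx : A *ᵥ x ≤ b) (hy : 0 ≤ y)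
    (hyA : c ≤ y ᵥ* A) : c ⬝ᵥ x ≤ y ⬝ᵥ b :=
  calc c ⬝ᵥ x ≤ y ᵥ* A ⬝ᵥ x := dotProduct_le_dotProduct_of_nonneg_right hyA hx
    _ = y ⬝ᵥ (A *ᵥ x) := (dotProduct_mulVec y A x).symm
    _ ≤ y ⬝ᵥ b := dotProduct_le_dotProduct_of_nonneg_left hAx hy

theorem dotProduct_le_dotProduct_iff_complementary (hx : 0 ≤ x) (hAx : A *ᵥ x ≤ b)
    (hy : 0 ≤ y) (hyA : c ≤ y ᵥ* A) :
    y ⬝ᵥ b ≤ c ⬝ᵥ x ↔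
      (∀ i, x i = 0 ∨ (y ᵥ* A) i = c i) ∧ ∀ k, y k = 0 ∨ (A *ᵥ x) k = b k := by
  have hgap : y ⬝ᵥ b - c ⬝ᵥ x = (y ᵥ* A - c) ⬝ᵥ x + y ⬝ᵥ (b - A *ᵥ x) := by
    rw [sub_dotProduct, dotProduct_sub, ← dotProduct_mulVec]
    ring
  have h₁ : ∀ i, 0 ≤ (y ᵥ* A - c) i * x i := fun i => mul_nonneg (sub_nonneg.2 (hyA i)) (hx i)
  have h₂ : ∀ k, 0 ≤ y k * (b - A *ᵥ x) k := fun k => mul_nonneg (hy k) (sub_nonneg.2 (hAx k))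
  have h₁' : 0 ≤ (y ᵥ* A - c) ⬝ᵥ x := Finset.sum_nonneg fun i _ => h₁ i
  have h₂' : 0 ≤ y ⬝ᵥ (b - A *ᵥ x) := Finset.sum_nonneg fun k _ => h₂ k
  rw [← sub_nonpos, hgap, (add_nonneg h₁' h₂').ge_iff_eq', add_eq_zero_iff_of_nonneg h₁' h₂',
    dotProduct, dotProduct, Finset.sum_eq_zero_iff_of_nonneg fun i _ => h₁ i,
    Finset.sum_eq_zero_iff_of_nonneg fun k _ => h₂ k]
  simp only [Finset.mem_univ, true_implies, mul_eq_zero, Pi.sub_apply, sub_eq_zero, or_comm,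
    eq_comm (a := b _)]

theorem exists_dual_le_of_optimal (hx : 0 ≤ x) (hAx : A *ᵥ x ≤ b)
    (hopt : ∀ z, 0 ≤ z → A *ᵥ z ≤ b → c ⬝ᵥ z ≤ c ⬝ᵥ x) :
    ∃ y, 0 ≤ y ∧ c ≤ y ᵥ* A ∧ y ⬝ᵥ b ≤ c ⬝ᵥ x := by
  rcases exists_le_vecMul_or_exists_mulVec_nonpos (fromCols A (replicateCol Unit (-b)))
    (Sum.elim c fun _ => -(c ⬝ᵥ x)) with ⟨y, hy, hle⟩ | ⟨z, hz, hPz, hdz⟩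
  · refine ⟨y, hy, fun i => by simpa using hle (.inl i), ?_⟩
    simpa [vecMul, dotProduct, dotProduct_comm] using hle (.inr ())
  -- The alternative gives `A z' ≤ t b` and `t (c ⬝ x) < c ⬝ z'`, where `z' ≥ 0` and `t ≥ 0`;
  -- then `(z' + x) / (t + 1)` is feasible and strictly better than `x`.
  exfalso
  set t := z (.inr ())
  have ht : 0 < t + 1 := by linarith [show 0 ≤ t from hz _]
  have hAz : ∀ k, (A *ᵥ (z ∘ Sum.inl)) k ≤ t * b k := fun k => by
    have hcol : (replicateCol Unit (-b) *ᵥ z ∘ Sum.inr) k = -(t * b k) := by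
      simp [mulVec, dotProduct, t, mul_comm]
    have := hPz k
    rw [fromCols_mulVec, Pi.add_apply, hcol, Pi.zero_apply] at this
    linarith
  have hcz : t * (c ⬝ᵥ x) < c ⬝ᵥ (z ∘ Sum.inl) := by
    simp only [dotProduct, Fintype.sum_sum_type, Sum.elim_inl, Sum.elim_inr,
      Fintype.sum_unique, Function.comp_apply] at hdz ⊢
    linarith
  have hw := hopt ((t + 1)⁻¹ • (z ∘ Sum.inl + x))
    (smul_nonneg (inv_nonneg.2 ht.le) (add_nonneg (fun i => hz _) hx)) fun k => by
      simp only [mulVec_smul, mulVec_add, Pi.smul_apply, Pi.add_apply, smul_eq_mul]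
      rw [inv_mul_le_iff₀ ht]
      linarith [hAz k, hAx k]
  rw [dotProduct_smul, dotProduct_add, smul_eq_mul, inv_mul_le_iff₀ ht] at hw
  linarith

end LinearProgramming

theorem Finset.sum_mul_eq_of_sum_le_one {α : Type*} {s : Finset α} {f g : α → ℝ} {j : α}
    (hf : ∀ i ∈ s, 0 ≤ f i) (hs : ∑ i ∈ s, f i ≤ 1) (hj : j ∈ s) (hfj : f j = 1) :
    ∑ i ∈ s, g i * f i = g j := by
  rw [Finset.sum_eq_single_of_mem j hj fun i hi hij => ?_, hfj, mul_one]
  have := Finset.add_le_sum hf hj hi hij.symm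
  rw [le_antisymm (by linarith) (hf i hi), mul_zero]

namespace CarpoolMarket

variable (c : CarpoolMarket)

def riderLoad (x : Finset c.M → c.R → ℝ) (m : c.M) : ℝ :=
  ∑ r : c.R, ∑ b ∈ c.Groups.filter (fun b => m ∈ b), x b r

def tripValue (x : Finset c.M → c.R → ℝ) (m : c.M) : ℝ :=
  ∑ r : c.R, ∑ b ∈ c.Groups.filter (fun b => m ∈ b), c.riderValue m b r * x b r

/-- `u` and `τ` are the dual variables of the rider and edge constraints of (LP). -/
def DualFeasible (u : c.M → ℝ) (τ : c.E → ℝ) : Prop :=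
  0 ≤ u ∧ 0 ≤ τ ∧ ∀ b ∈ c.Groups, ∀ r, c.V b r ≤ ∑ m ∈ b, u m + c.routeToll τ r

def dualObjective (u : c.M → ℝ) (τ : c.E → ℝ) : ℝ :=
  ∑ m, u m + ∑ e, τ e * (c.q e : ℝ)

def Complementary (x : Finset c.M → c.R → ℝ) (u : c.M → ℝ) (τ : c.E → ℝ) : Prop :=
  (∀ b ∈ c.Groups, ∀ r, x b r = 0 ∨ ∑ m ∈ b, u m + c.routeToll τ r = c.V b r) ∧
  (∀ m, u m = 0 ∨ c.riderLoad x m = 1) ∧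
  ∀ e, τ e = 0 ∨ c.edgeLoad x e = c.q e

/-- (LP) in the standard form `max lpObjective ⬝ᵥ z` subject to `lpMatrix *ᵥ z ≤ lpBound`,
`0 ≤ z`, with one variable per pair `(b, r)`; the columns of non-groups vanish, and `ofLP`
discards their entries. -/
def lpMatrix : Matrix (c.M ⊕ c.E) (Finset c.M × c.R) ℝ :=
  fromRows (of fun m i => if i.1 ∈ c.Groups ∧ m ∈ i.1 then 1 else 0)
    (of fun e i => if i.1 ∈ c.Groups ∧ e ∈ c.edges i.2 then 1 else 0)

def lpBound : c.M ⊕ c.E → ℝ := Sum.elim 1 fun e => c.q e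

def lpObjective : Finset c.M × c.R → ℝ := fun i => if i.1 ∈ c.Groups then c.V i.1 i.2 else 0

def ofLP (z : Finset c.M × c.R → ℝ) : Finset c.M → c.R → ℝ :=
  fun b r => if b ∈ c.Groups then z (b, r) else 0

variable {c} {x : Finset c.M → c.R → ℝ} {u : c.M → ℝ} {τ : c.E → ℝ}

theorem ofLP_uncurry (hx : ∀ b r, b ∉ c.Groups → x b r = 0) :
    c.ofLP (Function.uncurry x) = x := by
  ext b r
  by_cases hb : b ∈ c.Groups <;> simp [ofLP, hb, hx]

theorem sum_ite_mem_groups (g : Finset c.M × c.R → ℝ) :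
    ∑ i : Finset c.M × c.R, (if i.1 ∈ c.Groups then g i else 0) =
      ∑ b ∈ c.Groups, ∑ r, g (b, r) :=
  calc _ = ∑ b, if b ∈ c.Groups then ∑ r, g (b, r) else 0 :=
        Fintype.sum_prod_type _ |>.trans <| Finset.sum_congr rfl fun b _ => by split_ifs <;> simp
    _ = _ := Finset.sum_ite_mem_eq _ _

theorem lpMatrix_mulVec_inl (z : Finset c.M × c.R → ℝ) (m : c.M) :
    (c.lpMatrix *ᵥ z) (.inl m) = c.riderLoad (c.ofLP z) m := by
  simp only [lpMatrix, fromRows_mulVec, Sum.elim_inl]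
  simp only [mulVec, dotProduct, of_apply, ite_and, ite_mul, one_mul, zero_mul,
    sum_ite_mem_groups, riderLoad, Finset.sum_filter]
  rw [Finset.sum_comm]
  simp +contextual [ofLP]

theorem lpMatrix_mulVec_inr (z : Finset c.M × c.R → ℝ) (e : c.E) :
    (c.lpMatrix *ᵥ z) (.inr e) = c.edgeLoad (c.ofLP z) e := by
  simp only [lpMatrix, fromRows_mulVec, Sum.elim_inr]
  simp only [mulVec, dotProduct, of_apply, ite_and, ite_mul, one_mul, zero_mul,
    sum_ite_mem_groups, edgeLoad, Finset.sum_filter]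
  rw [Finset.sum_comm]
  refine Finset.sum_congr rfl fun r _ => ?_
  by_cases he : e ∈ c.edges r <;> simp +contextual [he, ofLP]

theorem lpObjective_dotProduct (z : Finset c.M × c.R → ℝ) :
    c.lpObjective ⬝ᵥ z = c.welfare (c.ofLP z) := by
  simp only [lpObjective, dotProduct, ite_mul, zero_mul, sum_ite_mem_groups]
  simp +contextual [welfare, ofLP]

theorem vecMul_lpMatrix (u : c.M → ℝ) (τ : c.E → ℝ) (b : Finset c.M) (r : c.R) :
    (Sum.elim u τ ᵥ* c.lpMatrix) (b, r) =
      if b ∈ c.Groups then ∑ m ∈ b, u m + c.routeToll τ r else 0 := by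
  by_cases hb : b ∈ c.Groups <;> simp [lpMatrix, vecMul, dotProduct, routeToll, hb]

theorem sumElim_dotProduct_lpBound (u : c.M → ℝ) (τ : c.E → ℝ) :
    Sum.elim u τ ⬝ᵥ c.lpBound = c.dualObjective u τ := by
  simp [lpBound, dualObjective, dotProduct, Fintype.sum_sum_type]

theorem LPFeasible.uncurry_nonneg (hx : c.LPFeasible x) : 0 ≤ Function.uncurry x :=
  fun i => hx.1 i.1 i.2

theorem LPFeasible.mulVec_le (hx : c.LPFeasible x) :
    c.lpMatrix *ᵥ Function.uncurry x ≤ c.lpBound := by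
  rintro (m | e)
  · rw [lpMatrix_mulVec_inl, ofLP_uncurry hx.2.1]
    exact hx.2.2.1 m
  · rw [lpMatrix_mulVec_inr, ofLP_uncurry hx.2.1]
    exact hx.2.2.2 e

theorem lpFeasible_ofLP {z : Finset c.M × c.R → ℝ} (hz : 0 ≤ z)
    (hAz : c.lpMatrix *ᵥ z ≤ c.lpBound) : c.LPFeasible (c.ofLP z) := by
  refine ⟨fun b r => ?_, fun b r hb => if_neg hb, fun m => ?_, fun e => ?_⟩
  · unfold ofLP
    split_ifs
    exacts [hz _, le_rfl]
  · exact (lpMatrix_mulVec_inl z m).symm.trans_le (hAz (.inl m))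
  · exact (lpMatrix_mulVec_inr z e).symm.trans_le (hAz (.inr e))

theorem dualFeasible_iff :
    c.DualFeasible u τ ↔ 0 ≤ Sum.elim u τ ∧ c.lpObjective ≤ Sum.elim u τ ᵥ* c.lpMatrix := by
  simp only [DualFeasible, Pi.le_def, Sum.forall, Prod.forall, vecMul_lpMatrix, lpObjective,
    Sum.elim_inl, Sum.elim_inr, Pi.zero_apply, and_assoc]
  refine and_congr_right' (and_congr_right' (forall_congr' fun b => ?_))
  by_cases hb : b ∈ c.Groups <;> simp [hb]

theorem complementary_iff (hx : c.LPFeasible x) :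
    c.Complementary x u τ ↔
      (∀ i, Function.uncurry x i = 0 ∨ (Sum.elim u τ ᵥ* c.lpMatrix) i = c.lpObjective i) ∧
        ∀ k, Sum.elim u τ k = 0 ∨ (c.lpMatrix *ᵥ Function.uncurry x) k = c.lpBound k := by
  simp only [Complementary, Sum.forall, Prod.forall, vecMul_lpMatrix, lpObjective,
    Sum.elim_inl, Sum.elim_inr, lpMatrix_mulVec_inl, lpMatrix_mulVec_inr, ofLP_uncurry hx.2.1,
    Function.uncurry_apply_pair, lpBound, Pi.one_apply]
  refine and_congr_left' (forall_congr' fun b => ?_)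
  by_cases hb : b ∈ c.Groups <;> simp [hb]

theorem LPFeasible.welfare_le_dualObjective (hx : c.LPFeasible x) (hd : c.DualFeasible u τ) :
    c.welfare x ≤ c.dualObjective u τ := by
  obtain ⟨hy, hyA⟩ := dualFeasible_iff.1 hd
  have := dotProduct_le_dotProduct_of_feasible hx.uncurry_nonneg hx.mulVec_le hy hyA
  rwa [lpObjective_dotProduct, ofLP_uncurry hx.2.1, sumElim_dotProduct_lpBound] at this

theorem LPFeasible.dualObjective_le_welfare_iff (hx : c.LPFeasible x)
    (hd : c.DualFeasible u τ) : c.dualObjective u τ ≤ c.welfare x ↔ c.Complementary x u τ := by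
  obtain ⟨hy, hyA⟩ := dualFeasible_iff.1 hd
  rw [complementary_iff hx, ← dotProduct_le_dotProduct_iff_complementary hx.uncurry_nonneg
    hx.mulVec_le hy hyA, lpObjective_dotProduct, ofLP_uncurry hx.2.1, sumElim_dotProduct_lpBound]

theorem LPOptimal.exists_dualFeasible (hx : c.LPOptimal x) :
    ∃ u τ, c.DualFeasible u τ ∧ c.dualObjective u τ ≤ c.welfare x := by
  obtain ⟨y, hy, hyA, hyx⟩ := exists_dual_le_of_optimal hx.1.uncurry_nonneg hx.1.mulVec_le
    fun z hz hAz => by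
      rw [lpObjective_dotProduct, lpObjective_dotProduct, ofLP_uncurry hx.1.2.1]
      exact hx.2 _ (lpFeasible_ofLP hz hAz)
  rw [← Sum.elim_comp_inl_inr y] at hy hyA hyx
  refine ⟨y ∘ Sum.inl, y ∘ Sum.inr, dualFeasible_iff.2 ⟨hy, hyA⟩, ?_⟩
  rwa [lpObjective_dotProduct, ofLP_uncurry hx.1.2.1, sumElim_dotProduct_lpBound] at hyx

variable {m : c.M} {b : Finset c.M} {r : c.R}

theorem sum_trips_mul_eq (hx : c.LPFeasible x) (hb : b ∈ c.Groups) (hm : m ∈ b)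
    (hxbr : x b r = 1) (φ : Finset c.M → c.R → ℝ) :
    ∑ r', ∑ b' ∈ c.Groups.filter (fun b => m ∈ b), φ b' r' * x b' r' = φ b r := by
  have hload : ∑ i ∈ Finset.univ ×ˢ c.Groups.filter (fun b => m ∈ b), x i.2 i.1 ≤ 1 := by
    rw [Finset.sum_product' (f := fun r b => x b r)]
    exact hx.2.2.1 m
  rw [← Finset.sum_product' (f := fun r b => φ b r * x b r)]
  exact Finset.sum_mul_eq_of_sum_le_one (j := (r, b)) (fun i _ => hx.1 _ _) hload
    (by simp [hb, hm]) hxbr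

theorem tripValue_eq (hx : c.LPFeasible x) (hb : b ∈ c.Groups) (hm : m ∈ b)
    (hxbr : x b r = 1) : c.tripValue x m = c.riderValue m b r :=
  sum_trips_mul_eq hx hb hm hxbr _

theorem riderLoad_eq_one (hx : c.LPFeasible x) (hb : b ∈ c.Groups) (hm : m ∈ b)
    (hxbr : x b r = 1) : c.riderLoad x m = 1 := by
  simpa [riderLoad] using sum_trips_mul_eq hx hb hm hxbr 1

theorem riderLoad_eq_zero (hm : ∀ b r, m ∈ b → x b r = 0) : c.riderLoad x m = 0 :=
  Finset.sum_eq_zero fun r _ => Finset.sum_eq_zero fun b hb => hm b r (Finset.mem_filter.1 hb).2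

theorem tripValue_eq_zero (hm : ∀ b r, m ∈ b → x b r = 0) : c.tripValue x m = 0 :=
  Finset.sum_eq_zero fun r _ => Finset.sum_eq_zero fun b hb => by
    rw [hm b r (Finset.mem_filter.1 hb).2, mul_zero]

variable {p : c.M → ℝ}

theorem IsEquilibrium.dualFeasible (h : c.IsEquilibrium x p τ) :
    c.DualFeasible (c.utility x p) τ :=
  ⟨h.2.2.1, h.2.1, fun b hb r => by linarith [h.2.2.2.1 b hb r]⟩

theorem IsEquilibrium.complementary (h : c.IsEquilibrium x p τ) :
    c.Complementary x (c.utility x p) τ := by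
  obtain ⟨⟨hbin, hx⟩, -, -, -, hbudget, hfree, hclear⟩ := h
  refine ⟨fun b hb r => (hbin b r).imp_right fun hxbr => ?_, fun m => ?_,
    fun e => (hx.2.2.2 e).lt_or_eq.imp_left (hclear e)⟩
  · have hu : ∀ m ∈ b, c.utility x p m = c.riderValue m b r - p m := fun m hm => by
      rw [utility, ← tripValue, tripValue_eq hx hb hm hxbr]
    rw [Finset.sum_congr rfl hu, Finset.sum_sub_distrib, hbudget b hb r hxbr, V]
    ring
  · by_cases hm : ∃ b r, m ∈ b ∧ x b r = 1
    · obtain ⟨b, r, hmb, hxbr⟩ := hm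
      have hb : b ∈ c.Groups := by
        by_contra hb
        simp [hx.2.1 b r hb] at hxbr
      exact .inr (riderLoad_eq_one hx hb hmb hxbr)
    · push Not at hm
      have h0 : ∀ b r, m ∈ b → x b r = 0 := fun b r hmb => (hbin b r).resolve_right (hm b r hmb)
      left
      rw [utility, ← tripValue, tripValue_eq_zero h0, hfree m h0, sub_zero]

theorem TripFeasible.isEquilibrium_of_complementary (hx : c.TripFeasible x)
    (hd : c.DualFeasible u τ) (hcs : c.Complementary x u τ) :
    c.IsEquilibrium x (fun m => c.tripValue x m - u m) τ := by
  have hu : c.utility x (fun m => c.tripValue x m - u m) = u := funext fun m => sub_sub_cancel _ _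
  obtain ⟨hu0, hτ0, hstab⟩ := hd
  obtain ⟨htrip, hrider, hedge⟩ := hcs
  refine ⟨hx, hτ0, hu.symm ▸ hu0, fun b hb r => ?_, fun b hb r hxbr => ?_, fun m hm => ?_,
    fun e he => (hedge e).resolve_right he.ne⟩
  · rw [hu]
    linarith [hstab b hb r]
  · have hV := (htrip b hb r).resolve_left (by rw [hxbr]; exact one_ne_zero)
    rw [Finset.sum_sub_distrib, Finset.sum_congr rfl fun m hm => tripValue_eq hx.2 hb hm hxbr]
    rw [V] at hV
    linarith
  · have hum : u m = 0 :=
      (hrider m).resolve_right (by rw [riderLoad_eq_zero hm]; exact zero_ne_one)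
    dsimp only
    rw [tripValue_eq_zero hm, hum, sub_zero]

end CarpoolMarket

/-- A market equilibrium `(x*, p*, τ*)` exists if and only if the linear
program (LP) has an optimal solution all of whose entries lie in `{0,1}`. -/
theorem equilibrium_exists_iff_LP_has_binary_optimum (c : CarpoolMarket) :
    (∃ x p τ, c.IsEquilibrium x p τ) ↔ ∃ x, c.LPOptimal x ∧ c.IsBinary x := by
  constructor
  · rintro ⟨x, p, τ, h⟩
    have hx : c.LPFeasible x := h.1.2
    have hle := (hx.dualObjective_le_welfare_iff h.dualFeasible).2 h.complementary
    exact ⟨x, ⟨hx, fun z hz => (hz.welfare_le_dualObjective h.dualFeasible).trans hle⟩, h.1.1⟩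
  · rintro ⟨x, hopt, hbin⟩
    obtain ⟨u, τ, hd, hle⟩ := hopt.exists_dualFeasible
    have hx : c.TripFeasible x := ⟨hbin, hopt.1⟩
    exact ⟨x, _, τ, hx.isEquilibrium_of_complementary hd
      ((hopt.1.dualObjective_le_welfare_iff hd).1 hle)⟩
end
end

section
/- Assume riders have homogeneous carpool disutility γ with γ(1)=0 and nondecreasing increments. Fix a route r with travel time t_r > 0 and define η^m_r = α^m − β^m·t_r and θ(d) = d·γ(d) + δ·d. Then for every nonempty b̄ ⊆ M, the augmented value satisfies V̄_r(b̄) = max_{1 ≤ d ≤ min(A,|b̄|)} ( Σ_{j=1}^d η^{(j)} − θ(d)·t_r ), where η^{(1)} ≥ η^{(2)} ≥ … are the values η^m_r for m ∈ b̄ listed in nonincreasing order; in particular, some representative group h_r(b̄) consists of the |h_r(b̄)| riders of b̄ with the largest values of η^m_r. -/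
open Classical
noncomputable section

variable {M : Type} [Fintype M] [DecidableEq M]

/-- the social trip value of a feasible group `b` (`1 ≤ |b| ≤ A`) on a route with travel time
`t`: `V(b) = ∑_{m∈b} α^m − (∑_{m∈b} β^m + |b|·γ(|b|) + δ|b|)·t` -/
def tripValue (α β : M → ℝ) (γ : ℕ → ℝ) (δ t : ℝ) (b : Finset M) : ℝ :=
  (∑ m ∈ b, α m) - ((∑ m ∈ b, β m) + (b.card : ℝ) * γ b.card + δ * (b.card : ℝ)) * t

/-- the augmented trip value function
`V̄(b̄) = max {V(b) : b ⊆ b̄, 1 ≤ |b| ≤ A}` (with value `0` on the empty set) -/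
def Vbar (A : ℕ) (V : Finset M → ℝ) (bb : Finset M) : ℝ :=
  if h : (bb.powerset.filter fun b => b.Nonempty ∧ b.card ≤ A).Nonempty then
    (bb.powerset.filter fun b => b.Nonempty ∧ b.card ≤ A).sup' h V
  else 0

/-- `b` is a representative rider group of the bundle `b̄` -/
def IsRep (A : ℕ) (V : Finset M → ℝ) (bb b : Finset M) : Prop :=
  b ⊆ bb ∧ b.Nonempty ∧ b.card ≤ A ∧ V b = Vbar A V bb

/-- `topSum η b̄ d = η^{(1)} + ⋯ + η^{(d)}`: the sum of the `d` largest values of `η` on `b̄`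
(listing the values `η^m` for `m ∈ b̄`, with multiplicity, in nonincreasing order). -/
def topSum (η : M → ℝ) (bb : Finset M) (d : ℕ) : ℝ :=
  ((((bb.val.map η).sort (· ≤ ·)).reverse).take d).sum

/-!
Once the group size `d` is fixed, the penalty `θ(d)·t` is fixed too, so `V̄` is a maximum over
`d` of `max {∑_{m∈b} η^m : b ⊆ b̄, |b| = d} − θ(d)·t`. The inner maximum is attained by the `d`
riders `T` with the largest `η`: for any other `b` of size `d`, the sets `b \ T` and `T \ b` have
equal size and every value of `η` on `T \ b` dominates every value on `b \ T`.
-/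

theorem Finset.sum_le_sum_of_card_eq_of_forall_le {ι R : Type*} [AddCommMonoid R] [LinearOrder R]
    [IsOrderedAddMonoid R] {s t : Finset ι} {f : ι → R} (hst : s.card = t.card)
    (hle : ∀ x ∈ s, ∀ y ∈ t, f x ≤ f y) : ∑ x ∈ s, f x ≤ ∑ y ∈ t, f y := by
  rcases s.eq_empty_or_nonempty with rfl | hs
  · rw [Finset.card_empty, eq_comm, Finset.card_eq_zero] at hst
    simp [hst]
  calc ∑ x ∈ s, f x ≤ s.card • s.sup' hs f := s.sum_le_card_nsmul f _ fun x hx => s.le_sup' f hx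
    _ = t.card • s.sup' hs f := by rw [hst]
    _ ≤ ∑ y ∈ t, f y := t.card_nsmul_le_sum f _ fun y hy => s.sup'_le hs f fun x hx => hle x hx y hy

section TopSet

variable {ι : Type} (η : ι → ℝ) (s : Finset ι)

def sortDesc : List ι := s.toList.mergeSort fun a b => decide (η b ≤ η a)

theorem perm_sortDesc : (sortDesc η s).Perm s.toList := List.mergeSort_perm _ _

theorem pairwise_sortDesc : (sortDesc η s).Pairwise fun a b => η b ≤ η a := by
  simpa [sortDesc] using List.pairwise_mergeSort (le := fun a b => decide (η b ≤ η a))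
    (by simpa using fun a b c hab hbc => hbc.trans hab) (by simpa using fun a b => le_total _ _)
    s.toList

theorem nodup_sortDesc : (sortDesc η s).Nodup := (perm_sortDesc η s).nodup_iff.mpr s.nodup_toList

theorem mem_sortDesc {m : ι} : m ∈ sortDesc η s ↔ m ∈ s := by
  rw [(perm_sortDesc η s).mem_iff, Finset.mem_toList]

theorem map_sortDesc : (sortDesc η s).map η = ((s.val.map η).sort (· ≤ ·)).reverse := by
  rw [← List.reverse_eq_iff]
  refine List.Perm.eq_of_pairwise' (r := (· ≤ ·)) ?_ (Multiset.pairwise_sort _ _) ?_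
  · rw [List.pairwise_reverse]
    exact (pairwise_sortDesc η s).map η fun _ _ => id
  · rw [← Multiset.coe_eq_coe, Multiset.sort_eq, Multiset.coe_reverse, ← Multiset.map_coe,
      Multiset.coe_eq_coe.mpr (perm_sortDesc η s), Finset.coe_toList]

variable [DecidableEq ι]

def topSet (d : ℕ) : Finset ι := ((sortDesc η s).take d).toFinset

variable {η s}

theorem topSet_subset (d : ℕ) : topSet η s d ⊆ s := fun _ hm =>
  (mem_sortDesc η s).mp (List.mem_of_mem_take (List.mem_toFinset.mp hm))

theorem card_topSet {d : ℕ} (hd : d ≤ s.card) : (topSet η s d).card = d := by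
  rw [topSet, List.toFinset_card_of_nodup ((nodup_sortDesc η s).sublist (List.take_sublist d _)),
    List.length_take, (perm_sortDesc η s).length_eq, Finset.length_toList]
  exact min_eq_left hd

theorem sum_topSet (d : ℕ) : ∑ m ∈ topSet η s d, η m = topSum η s d := by
  rw [topSet, List.sum_toFinset _ ((nodup_sortDesc η s).sublist (List.take_sublist d _)),
    List.map_take, map_sortDesc, topSum]

theorem le_of_mem_topSet {d : ℕ} {m m' : ι} (hm : m ∈ topSet η s d) (hm' : m' ∈ s)
    (hm'd : m' ∉ topSet η s d) : η m' ≤ η m := by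
  have hpair := pairwise_sortDesc η s
  rw [← List.take_append_drop d (sortDesc η s), List.pairwise_append] at hpair
  refine hpair.2.2 m (List.mem_toFinset.mp hm) m' ?_
  have := (mem_sortDesc η s).mpr hm'
  rw [← List.take_append_drop d (sortDesc η s), List.mem_append] at this
  exact this.resolve_left fun h => hm'd (List.mem_toFinset.mpr h)

theorem sum_le_topSum {b : Finset ι} (hb : b ⊆ s) : ∑ m ∈ b, η m ≤ topSum η s b.card := by
  set T := topSet η s b.card
  have hT : T.card = b.card := card_topSet (Finset.card_le_card hb)
  have hexchange : ∑ m ∈ b \ T, η m ≤ ∑ m ∈ T \ b, η m :=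
    Finset.sum_le_sum_of_card_eq_of_forall_le (Finset.card_sdiff_comm hT.symm) fun x hx y hy =>
      le_of_mem_topSet (Finset.sdiff_subset hy) (hb (Finset.sdiff_subset hx))
        (Finset.mem_sdiff.mp hx).2
  rw [← sum_topSet, ← Finset.sum_inter_add_sum_sdiff b T, ← Finset.sum_inter_add_sum_sdiff T b,
    Finset.inter_comm]
  exact add_le_add_right hexchange _

end TopSet

section CardinalityPenalty

variable {ι : Type} [DecidableEq ι] {A : ℕ} (η : ι → ℝ) (g : ℕ → ℝ) {s : Finset ι}

theorem topSet_feasible {d : ℕ} (hd1 : 1 ≤ d) (hd : d ≤ min A s.card) :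
    topSet η s d ∈ s.powerset.filter fun b => b.Nonempty ∧ b.card ≤ A := by
  have hcard := card_topSet (η := η) (hd.trans (min_le_right _ _))
  simp only [Finset.mem_filter, Finset.mem_powerset, ← Finset.card_pos, hcard]
  exact ⟨topSet_subset d, hd1, hd.trans (min_le_left _ _)⟩

theorem vbar_sum_sub_eq_sup' (hA : 1 ≤ A) (hs : s.Nonempty) :
    Vbar A (fun b => ∑ m ∈ b, η m - g b.card) s =
      (Finset.Icc 1 (min A s.card)).sup'
        (Finset.nonempty_Icc.mpr (le_min hA (Finset.card_pos.mpr hs)))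
        (fun d => topSum η s d - g d) := by
  have hfeas : (s.powerset.filter fun b => b.Nonempty ∧ b.card ≤ A).Nonempty :=
    ⟨_, topSet_feasible η le_rfl (le_min hA (Finset.card_pos.mpr hs))⟩
  rw [Vbar, dif_pos hfeas]
  apply le_antisymm
  · refine Finset.sup'_le _ _ fun b hb => ?_
    simp only [Finset.mem_filter, Finset.mem_powerset] at hb
    obtain ⟨hbs, hb1, hbA⟩ := hb
    calc ∑ m ∈ b, η m - g b.card ≤ topSum η s b.card - g b.card := by
          gcongr; exact sum_le_topSum hbs
      _ ≤ _ := Finset.le_sup' (fun d => topSum η s d - g d) <| Finset.mem_Icc.mpr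
          ⟨Finset.card_pos.mpr hb1, le_min hbA (Finset.card_le_card hbs)⟩
  · refine Finset.sup'_le _ _ fun d hd => ?_
    rw [Finset.mem_Icc] at hd
    calc topSum η s d - g d
        = ∑ m ∈ topSet η s d, η m - g (topSet η s d).card := by
          rw [sum_topSet, card_topSet (hd.2.trans (min_le_right _ _))]
      _ ≤ _ := Finset.le_sup' (fun b => ∑ m ∈ b, η m - g b.card) (topSet_feasible η hd.1 hd.2)

theorem exists_isRep_topSet (hA : 1 ≤ A) (hs : s.Nonempty) :
    ∃ d, IsRep A (fun b => ∑ m ∈ b, η m - g b.card) s (topSet η s d) := by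
  obtain ⟨d, hd, hmax⟩ := Finset.exists_mem_eq_sup'
    (Finset.nonempty_Icc.mpr (le_min hA (Finset.card_pos.mpr hs))) (fun d => topSum η s d - g d)
  rw [Finset.mem_Icc] at hd
  have hfeas := topSet_feasible η hd.1 hd.2
  simp only [Finset.mem_filter, Finset.mem_powerset] at hfeas
  refine ⟨d, hfeas.1, hfeas.2.1, hfeas.2.2, ?_⟩
  rw [vbar_sum_sub_eq_sup' η g hA hs, hmax]
  dsimp only
  rw [sum_topSet, card_topSet (hd.2.trans (min_le_right _ _))]

end CardinalityPenalty

theorem tripValue_eq_sum_sub {ι : Type} (α β : ι → ℝ) (γ : ℕ → ℝ) (δ t : ℝ) :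
    tripValue α β γ δ t = fun b => ∑ m ∈ b, (α m - β m * t) -
      ((b.card : ℝ) * γ b.card + δ * (b.card : ℝ)) * t := by
  funext b
  simp only [tripValue, Finset.sum_sub_distrib, ← Finset.sum_mul]
  ring

theorem vbar_eq_max_topSum_general
    (A : ℕ) (hA : 1 ≤ A) (α β : M → ℝ) (γ : ℕ → ℝ) (δ t : ℝ)
    (bb : Finset M) (hbb : bb.Nonempty) :
    Vbar A (tripValue α β γ δ t) bb =
      (Finset.Icc 1 (min A bb.card)).sup'
        (Finset.nonempty_Icc.mpr (le_min hA (Finset.card_pos.mpr hbb)))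
        (fun d => topSum (fun m => α m - β m * t) bb d -
          ((d : ℝ) * γ d + δ * (d : ℝ)) * t) ∧
    ∃ b : Finset M, IsRep A (tripValue α β γ δ t) bb b ∧
      ∀ m ∈ b, ∀ m' ∈ bb, m' ∉ b → α m' - β m' * t ≤ α m - β m * t := by
  rw [tripValue_eq_sum_sub]
  set η := fun m => α m - β m * t
  set θt := fun d : ℕ => ((d : ℝ) * γ d + δ * (d : ℝ)) * t
  obtain ⟨d, hrep⟩ := exists_isRep_topSet η θt hA hbb
  exact ⟨vbar_sum_sub_eq_sup' η θt hA hbb, _, hrep,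
    fun m hm m' hm' hm'd => le_of_mem_topSet hm hm' hm'd⟩

/-- Under homogeneous carpool disutility `γ`, with `η^m = α^m − β^m t` and
`θ(d) = d·γ(d) + δ·d`, for every nonempty `b̄ ⊆ M` the augmented value satisfies
`V̄(b̄) = max_{1 ≤ d ≤ min(A,|b̄|)} (∑_{j=1}^d η^{(j)} − θ(d)·t)`, where
`η^{(1)} ≥ η^{(2)} ≥ …` are the values `η^m`, `m ∈ b̄`, in nonincreasing order; in particular
some representative group of `b̄` consists of riders of `b̄` with the largest values
of `η^m`. -/
theorem vbar_eq_max_topSum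
    (A : ℕ) (hA : 1 ≤ A) (α β : M → ℝ) (γ : ℕ → ℝ) (δ t : ℝ)
    (hγ1 : γ 1 = 0)
    (hγ0 : ∀ d, 1 ≤ d → d ≤ A → 0 ≤ γ d)
    (hγincr : ∀ d, 2 ≤ d → d < A → γ d - γ (d - 1) ≤ γ (d + 1) - γ d)
    (hδ : 0 ≤ δ) (ht : 0 < t)
    (bb : Finset M) (hbb : bb.Nonempty) :
    Vbar A (tripValue α β γ δ t) bb =
      (Finset.Icc 1 (min A bb.card)).sup'
        (Finset.nonempty_Icc.mpr (le_min hA (Finset.card_pos.mpr hbb)))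
        (fun d => topSum (fun m => α m - β m * t) bb d -
          ((d : ℝ) * γ d + δ * (d : ℝ)) * t) ∧
    ∃ b : Finset M, IsRep A (tripValue α β γ δ t) bb b ∧
      ∀ m ∈ b, ∀ m' ∈ bb, m' ∉ b → α m' - β m' * t ≤ α m - β m * t :=
  vbar_eq_max_topSum_general A hA α β γ δ t bb hbb
end
end

section
/- Assume riders have homogeneous carpool disutility γ with γ(1)=0 and nondecreasing increments. Fix a route r with t_r > 0, define η^m_r = α^m − β^m·t_r and θ(d) = d·γ(d) + δ·d, and for a nonempty set b̄ ⊆ M let d(b̄) denote the largest d ∈ {1,…,min(A,|b̄|)} attaining max_{1 ≤ d' ≤ min(A,|b̄|)}(Σ_{j=1}^{d'} η^{(j)} − θ(d')·t_r), where η^{(1)} ≥ η^{(2)} ≥ … are the values η^m_r for m ∈ b̄ in nonincreasing order (so d(b̄) is the largest cardinality of a representative group of b̄ on r). Then d is monotone: for nonempty b̄ ⊆ b̄' ⊆ M, d(b̄) ≤ d(b̄'). -/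
/-! The objective is `F_b̄(d) = topSum b̄ d − θ(d)·t`, and its increments in `d` grow with `b̄`:
`topSum b̄ b − topSum b̄ a` is the sum of the entries at positions `a, …, b−1` of the
nonincreasing list of `η`-values, and enlarging `b̄` can only push each such entry up.
With increasing differences, the largest maximizer cannot decrease (Topkis): if `d' < d`, then
`F_b̄'(d) − F_b̄'(d') ≥ F_b̄(d) − F_b̄(d') ≥ 0`, so `d` would be a maximizer of `F_b̄'` larger
than `d'`. -/

open Classical
noncomputable section

variable {M : Type} [Fintype M] [DecidableEq M]

/-- `d` is the largest element of `s` maximizing `f` over `s` -/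
def LargestMaximizer (f : ℕ → ℝ) (s : Finset ℕ) (d : ℕ) : Prop :=
  d ∈ s ∧ (∀ d' ∈ s, f d' ≤ f d) ∧ (∀ d' ∈ s, f d' = f d → d' ≤ d)

namespace List

theorem Sublist.getElem_le_getElem_of_sortedGE {α : Type*} [Preorder α] {l l' : List α}
    (h : l <+ l') (hl' : l'.SortedGE) {j : ℕ} (hj : j < l.length) (hj' : j < l'.length) :
    l[j] ≤ l'[j] := by
  obtain ⟨f, hf⟩ := sublist_iff_exists_orderEmbedding_getElem?_eq.1 h
  have hfj : l'[f j]? = some l[j] := by rw [← hf, getElem?_eq_getElem hj]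
  obtain ⟨hfj', hget⟩ := getElem?_eq_some_iff.1 hfj
  rw [← hget]
  exact hl'.getElem_ge_getElem_of_le (f.strictMono.id_le j)

theorem Sublist.sum_take_sub_sum_take_le_of_sortedGE {α : Type*} [AddCommGroup α]
    [PartialOrder α] [IsOrderedAddMonoid α] {l l' : List α} (h : l <+ l') (hl' : l'.SortedGE)
    {a b : ℕ} (hab : a ≤ b) (hb : b ≤ l.length) :
    (l.take b).sum - (l.take a).sum ≤ (l'.take b).sum - (l'.take a).sum := by
  induction b, hab using Nat.le_induction with
  | base => simp
  | succ b _ ih =>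
    have hb' : b < l'.length := lt_of_lt_of_le hb h.length_le
    rw [sum_take_succ _ _ hb, sum_take_succ _ _ hb', add_sub_right_comm, add_sub_right_comm]
    exact add_le_add (ih (by omega)) (h.getElem_le_getElem_of_sortedGE hl' hb hb')

end List

theorem Multiset.sort_sublist_sort_of_le {α : Type*} (r : α → α → Prop) [DecidableRel r]
    [IsTrans α r] [Std.Antisymm r] [Std.Total r] {s t : Multiset α} (h : s ≤ t) :
    List.Sublist (s.sort r) (t.sort r) :=
  List.sublist_of_subperm_of_pairwise (by rwa [← Multiset.coe_le, sort_eq, sort_eq])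
    (pairwise_sort s r) (pairwise_sort t r)

theorem topSum_sub_topSum_le_of_subset {ι : Type} (η : ι → ℝ) {bb bb' : Finset ι} (h : bb ⊆ bb')
    {a b : ℕ} (hab : a ≤ b) (hb : b ≤ bb.card) :
    topSum η bb b - topSum η bb a ≤ topSum η bb' b - topSum η bb' a := by
  have hsub : List.Sublist ((bb.val.map η).sort (· ≤ ·)) ((bb'.val.map η).sort (· ≤ ·)) :=
    Multiset.sort_sublist_sort_of_le _ (Multiset.map_le_map (Finset.val_le_iff.2 h))
  exact hsub.reverse.sum_take_sub_sum_take_le_of_sortedGE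
    (Multiset.pairwise_sort _ _).sortedLE.reverse hab (by simpa using hb)

theorem LargestMaximizer.le_of_sub_le {f g : ℕ → ℝ} {s s' : Finset ℕ} {d d' : ℕ}
    (hd : LargestMaximizer f s d) (hd' : LargestMaximizer g s' d')
    (h : d' < d → d' ∈ s ∧ d ∈ s' ∧ f d - f d' ≤ g d - g d') : d ≤ d' := by
  by_contra! hlt
  obtain ⟨hd's, hds', hfg⟩ := h hlt
  have hf : f d' ≤ f d := hd.2.1 d' hd's
  have hg : g d < g d' :=
    lt_of_le_of_ne (hd'.2.1 d hds') fun heq => hlt.not_ge (hd'.2.2 d hds' heq)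
  linarith

theorem largest_representative_size_monotone_general
    (A : ℕ) (α β : M → ℝ) (γ : ℕ → ℝ) (δ t : ℝ)
    (bb bb' : Finset M) (hsub : bb ⊆ bb')
    (d d' : ℕ)
    (hd : LargestMaximizer
      (fun d => topSum (fun m => α m - β m * t) bb d - ((d : ℝ) * γ d + δ * (d : ℝ)) * t)
      (Finset.Icc 1 (min A bb.card)) d)
    (hd' : LargestMaximizer
      (fun d => topSum (fun m => α m - β m * t) bb' d - ((d : ℝ) * γ d + δ * (d : ℝ)) * t)
      (Finset.Icc 1 (min A bb'.card)) d') :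
    d ≤ d' := by
  refine hd.le_of_sub_le hd' fun hlt => ?_
  obtain ⟨hd1, hdA⟩ := Finset.mem_Icc.1 hd.1
  have hd'1 := (Finset.mem_Icc.1 hd'.1).1
  have hgain := topSum_sub_topSum_le_of_subset (fun m => α m - β m * t) hsub hlt.le
    (hdA.trans (min_le_right _ _))
  refine ⟨Finset.mem_Icc.2 ⟨hd'1, hlt.le.trans hdA⟩,
    Finset.mem_Icc.2 ⟨hd1, hdA.trans (min_le_min_left A (Finset.card_le_card hsub))⟩, ?_⟩
  linarith

/-- Under homogeneous carpool disutility `γ`, with `η^m = α^m − β^m t` and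
`θ(d) = d·γ(d) + δ·d`, let `d(b̄)` be the largest `d ∈ {1,…,min(A,|b̄|)}` attaining
`max_{d'} (∑_{j=1}^{d'} η^{(j)} − θ(d')·t)` (the largest cardinality of a representative
group of `b̄`).  Then `d` is monotone: for nonempty `b̄ ⊆ b̄'`, `d(b̄) ≤ d(b̄')`. -/
theorem largest_representative_size_monotone
    (A : ℕ) (hA : 1 ≤ A) (α β : M → ℝ) (γ : ℕ → ℝ) (δ t : ℝ)
    (hγ1 : γ 1 = 0)
    (hγ0 : ∀ d, 1 ≤ d → d ≤ A → 0 ≤ γ d)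
    (hγincr : ∀ d, 2 ≤ d → d < A → γ d - γ (d - 1) ≤ γ (d + 1) - γ d)
    (hδ : 0 ≤ δ) (ht : 0 < t)
    (bb bb' : Finset M) (hbb : bb.Nonempty) (hsub : bb ⊆ bb')
    (d d' : ℕ)
    (hd : LargestMaximizer
      (fun d => topSum (fun m => α m - β m * t) bb d - ((d : ℝ) * γ d + δ * (d : ℝ)) * t)
      (Finset.Icc 1 (min A bb.card)) d)
    (hd' : LargestMaximizer
      (fun d => topSum (fun m => α m - β m * t) bb' d - ((d : ℝ) * γ d + δ * (d : ℝ)) * t)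
      (Finset.Icc 1 (min A bb'.card)) d') :
    d ≤ d' :=
  largest_representative_size_monotone_general A α β γ δ t bb bb' hsub d d' hd hd'
end
end

section
/- If all riders have homogeneous carpool disutility, i.e. γ^m(d) = γ(d) for all m ∈ M and all d ∈ {1,…,A}, then for any finite route set R* with travel times t_r > 0 and positive integer capacities k*_r (in particular the output of the greedy route-capacity allocation), the program (LPk*) has an optimal solution with all entries in {0,1}. -/
open Classical
noncomputable section

variable {M : Type} [Fintype M] [DecidableEq M] {R : Type} [Fintype R]

/-- the set `B` of feasible rider groups: nonempty subsets of `M` of size at most `A` -/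
def Groups (M : Type) [Fintype M] [DecidableEq M] (A : ℕ) : Finset (Finset M) :=
  Finset.univ.filter fun b => b.Nonempty ∧ b.card ≤ A

/-- the social trip value under homogeneous carpool disutility `γ`:
`V_r(b) = ∑_{m∈b} α^m − (∑_{m∈b} β^m + |b|·γ(|b|) + δ|b|)·t_r` -/
def Vhom (α β : M → ℝ) (γ : ℕ → ℝ) (δ : ℝ) (t : R → ℝ) (r : R) (b : Finset M) : ℝ :=
  (∑ m ∈ b, α m) -
    ((∑ m ∈ b, β m) + (b.card : ℝ) * γ b.card + δ * (b.card : ℝ)) * t r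

/-- a vector has all its entries in `{0,1}` -/
def IsBinaryX (x : Finset M → R → ℝ) : Prop := ∀ b r, x b r = 0 ∨ x b r = 1

/-- feasible solutions of (LPk*) -/
def LPkFeasible (A : ℕ) (k : R → ℕ) (x : Finset M → R → ℝ) : Prop :=
  (∀ b r, 0 ≤ x b r) ∧
  (∀ b r, b ∉ Groups M A → x b r = 0) ∧
  (∀ m : M, (∑ r : R, ∑ b ∈ (Groups M A).filter (fun b => m ∈ b), x b r) ≤ 1) ∧
  (∀ r : R, (∑ b ∈ Groups M A, x b r) ≤ (k r : ℝ))

/-- objective of (LPk*) -/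
def LPkObj (A : ℕ) (V : R → Finset M → ℝ) (x : Finset M → R → ℝ) : ℝ :=
  ∑ b ∈ Groups M A, ∑ r : R, V r b * x b r

/-- optimal solutions of (LPk*) -/
def LPkOptimal (A : ℕ) (V : R → Finset M → ℝ) (k : R → ℕ) (x : Finset M → R → ℝ) : Prop :=
  LPkFeasible A k x ∧ ∀ y, LPkFeasible A k y → LPkObj A V y ≤ LPkObj A V x

/-!
Take route `r` to have `k r` cars of `A` seats each, and charge seat `j` of a car on route `r`
the amount `t_r (f(j+1) - f(j))`, where `f(d) = d γ(d) + δ d` is the in-car cost of a car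
with `d` riders. Spreading every group `b` of a feasible solution uniformly over the cars of
its route and over the seats `0, …, |b| - 1` of each car gives a doubly substochastic
rider × seat matrix with the same objective value. By the Birkhoff–von Neumann theorem some
partial matching of riders to seats does at least as well. The cars of a matching are the
groups of a binary feasible solution, and as `γ` is nondecreasing and convex the marginal
costs `f(j+1) - f(j)` increase, so the riders of a car pay at least `f` of its size in seat
charges: the binary solution is no worse than the matching. Hence a best one among the finitely
many assignments of riders to cars is optimal.
-/

open Finset

namespace Matrix

theorem exists_perm_sum_mul_le_of_mem_doublyStochastic {n : Type*} [Fintype n] [DecidableEq n]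
    {Q : Matrix n n ℝ} (hQ : Q ∈ doublyStochastic ℝ n) (W : Matrix n n ℝ) :
    ∃ σ : Equiv.Perm n, ∑ i, ∑ j, Q i j * W i j ≤ ∑ i, ∑ j, σ.permMatrix ℝ i j * W i j := by
  let pairing : Matrix n n ℝ →ₗ[ℝ] ℝ :=
    { toFun := fun P => ∑ i, ∑ j, P i j * W i j
      map_add' := by simp [add_mul, sum_add_distrib]
      map_smul' := by simp [mul_assoc, mul_sum] }
  have hQ' : Q ∈ convexHull ℝ {σ.permMatrix ℝ | σ : Equiv.Perm n} := by
    rwa [← doublyStochastic_eq_convexHull_permMatrix]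
  obtain ⟨_, ⟨σ, rfl⟩, hσ⟩ :=
    (pairing.convexOn convex_univ).exists_ge_of_mem_convexHull (Set.subset_univ _) hQ'
  exact ⟨σ, hσ⟩

theorem exists_pequiv_sum_mul_le_of_substochastic {ι κ : Type*} [Fintype ι] [DecidableEq ι]
    [Fintype κ] [DecidableEq κ] {P : Matrix ι κ ℝ} (hP : ∀ i j, 0 ≤ P i j)
    (hrow : ∀ i, ∑ j, P i j ≤ 1) (hcol : ∀ j, ∑ i, P i j ≤ 1) (W : Matrix ι κ ℝ) :
    ∃ f : ι ≃. κ, ∑ i, ∑ j, P i j * W i j ≤ ∑ i, ∑ j, f.toMatrix i j * W i j := by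
  let Q : Matrix (ι ⊕ κ) (ι ⊕ κ) ℝ :=
    fromBlocks (diagonal fun i => 1 - ∑ j, P i j) P Pᵀ (diagonal fun j => 1 - ∑ i, P i j)
  have hQ : Q ∈ doublyStochastic ℝ (ι ⊕ κ) := by
    refine mem_doublyStochastic_iff_sum.2 ⟨?_, ?_, ?_⟩
    · rintro (i | j) (i' | j') <;> simp [Q, diagonal_apply, hP] <;> split_ifs <;> simp [hrow, hcol]
    · rintro (i | j) <;> simp [Q, Fintype.sum_sum_type, diagonal_apply]
    · rintro (i | j) <;> simp [Q, Fintype.sum_sum_type, diagonal_apply]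
  obtain ⟨σ, hσ⟩ := exists_perm_sum_mul_le_of_mem_doublyStochastic hQ (fromBlocks 0 W 0 0)
  let f : ι ≃. κ :=
    { toFun := fun i => (σ (.inl i)).getRight?
      invFun := fun j => (σ.symm (.inr j)).getLeft?
      inv := fun i j => by
        simp only [Sum.getLeft?_eq_some_iff, Sum.getRight?_eq_some_iff]
        exact σ.symm_apply_eq.trans eq_comm }
  refine ⟨f, ?_⟩
  convert hσ using 1
  · simp [Q, Fintype.sum_sum_type]
  · have hW : ∀ (j : κ) (a : ι ⊕ κ), fromBlocks 0 W 0 0 (.inr j) a = 0 := fun j a => by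
      cases a <;> rfl
    simp only [Fintype.sum_sum_type, Equiv.Perm.permMatrix, PEquiv.toMatrix_apply,
      Equiv.toPEquiv_apply, Option.mem_def, Option.some_inj, ite_mul, one_mul, zero_mul,
      sum_ite_eq, mem_univ, if_true, hW, sum_const_zero, add_zero]
    refine sum_congr rfl fun i _ => ?_
    rcases h : σ (.inl i) with i' | j' <;> simp [f, h]

end Matrix

theorem Finset.sum_range_card_le_sum_of_monotoneOn {β : Type*} [AddCommMonoid β]
    [PartialOrder β] [IsOrderedAddMonoid β] {g : ℕ → β} {n : ℕ} (hg : MonotoneOn g (Set.Iio n))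
    {S : Finset ℕ} (hS : S ⊆ range n) : ∑ i ∈ range #S, g i ≤ ∑ i ∈ S, g i := by
  induction S using Finset.induction_on_max with
  | empty => simp
  | insert a s hlt ih =>
    have ha : a ∉ s := fun h => lt_irrefl a (hlt a h)
    have han : a < n := mem_range.1 (hS (mem_insert_self a s))
    have hsa : #s ≤ a := by
      simpa using card_le_card (fun i hi => mem_range.2 (hlt i hi) : s ⊆ range a)
    rw [card_insert_of_notMem ha, sum_range_succ, sum_insert ha, add_comm (g a)]
    exact add_le_add (ih ((subset_insert a s).trans hS))
      (hg (by simp; omega) (by simpa using han) hsa)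

theorem Fin.sum_ite_lt_eq_sum_range {β : Type*} [AddCommMonoid β] {n d : ℕ} (hd : d ≤ n)
    (F : ℕ → β) : ∑ j : Fin n, (if (j : ℕ) < d then F j else 0) = ∑ j ∈ range d, F j := by
  rw [Fin.sum_univ_eq_sum_range (fun j => if j < d then F j else 0), ← sum_filter]
  congr 1
  ext j
  simp only [mem_filter, mem_range]
  omega

def carCost (γ : ℕ → ℝ) (δ : ℝ) (d : ℕ) : ℝ := d * γ d + δ * d

def marginalCost (γ : ℕ → ℝ) (δ : ℝ) (j : ℕ) : ℝ := carCost γ δ (j + 1) - carCost γ δ j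

theorem carCost_eq_sum_marginalCost (γ : ℕ → ℝ) (δ : ℝ) (d : ℕ) :
    carCost γ δ d = ∑ j ∈ range d, marginalCost γ δ j := by
  simp only [marginalCost]
  rw [sum_range_sub (carCost γ δ)]
  simp [carCost]

section ConvexDisutility

variable {A : ℕ} {γ : ℕ → ℝ} (hγ1 : γ 1 = 0) (hγ0 : ∀ d, 1 ≤ d → d ≤ A → 0 ≤ γ d)
  (hγincr : ∀ d, 2 ≤ d → d < A → γ d - γ (d - 1) ≤ γ (d + 1) - γ d)
include hγ1 hγ0 hγincr

theorem disutility_le_succ {d : ℕ} (hd : 1 ≤ d) (hdA : d < A) : γ d ≤ γ (d + 1) := by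
  induction d, hd using Nat.le_induction with
  | base => linarith [hγ0 2 one_le_two (by omega)]
  | succ d hd ih =>
    have := hγincr (d + 1) (by omega) hdA
    simp only [Nat.add_sub_cancel] at this
    linarith [ih (by omega)]

theorem marginalCost_le_succ (δ : ℝ) {j : ℕ} (hj : j + 1 < A) :
    marginalCost γ δ j ≤ marginalCost γ δ (j + 1) := by
  simp only [marginalCost, carCost]
  push_cast
  rcases Nat.eq_zero_or_pos j with rfl | hj0
  · norm_num [hγ1]; linarith [hγ0 2 one_le_two (by omega)]
  · have hconvex := hγincr (j + 1) (by omega) (by omega)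
    simp only [Nat.add_sub_cancel] at hconvex
    have h1 := disutility_le_succ hγ1 hγ0 hγincr hj0 (by omega)
    have h2 := disutility_le_succ hγ1 hγ0 hγincr (d := j + 1) (by omega) (by omega)
    have hj : (0 : ℝ) ≤ j := j.cast_nonneg
    -- the difference is `(j + 1) * Δ²γ(j + 1) + (γ (j + 2) - γ j)`
    nlinarith

theorem monotoneOn_marginalCost (δ : ℝ) : MonotoneOn (marginalCost γ δ) (Set.Iio A) :=
  monotoneOn_of_le_succ Set.ordConnected_Iio fun j _ _ hj =>
    marginalCost_le_succ hγ1 hγ0 hγincr δ (by simpa using hj)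

end ConvexDisutility

abbrev Car (k : R → ℕ) := Σ r : R, Fin (k r)

abbrev Seat (k : R → ℕ) (A : ℕ) := Car k × Fin A

theorem sum_car_ite_route_eq (k : R → ℕ) (r : R) (a : ℝ) :
    ∑ p : Car k, (if p.1 = r then a else 0) = k r * a := by
  rw [Fintype.sum_sigma, sum_eq_single r (fun x _ hx => by simp [hx]) (by simp)]
  simp

section GroupValue

omit [Fintype M] [DecidableEq M] [Fintype R]

def groupValue (w : M → R → ℝ) (t : R → ℝ) (g : ℕ → ℝ) (r : R) (b : Finset M) : ℝ :=
  ∑ m ∈ b, w m r - t r * ∑ j ∈ range #b, g j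

theorem Vhom_eq_groupValue (α β : M → ℝ) (γ : ℕ → ℝ) (δ : ℝ) (t : R → ℝ) :
    Vhom α β γ δ t = groupValue (fun m r => α m - β m * t r) t (marginalCost γ δ) := by
  ext r b
  simp only [Vhom, groupValue, ← carCost_eq_sum_marginalCost, carCost, sum_sub_distrib, ← sum_mul]
  ring

theorem sum_sub_le_groupValue (w : M → R → ℝ) {t : R → ℝ} {g : ℕ → ℝ} {A : ℕ} {r : R}
    (ht : 0 ≤ t r) (hg : MonotoneOn g (Set.Iio A)) {S : Finset M} {idx : M → ℕ}
    (hinj : Set.InjOn idx S) (hidx : S.image idx ⊆ range A) :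
    ∑ m ∈ S, (w m r - t r * g (idx m)) ≤ groupValue w t g r S := by
  rw [groupValue, sum_sub_distrib, ← mul_sum]
  gcongr ?_ - t r * ?_
  rw [← sum_image hinj, ← card_image_of_injOn hinj]
  exact sum_range_card_le_sum_of_monotoneOn hg hidx

end GroupValue

section CarAssignment

variable {k : R → ℕ} (car : M → Option (Car k)) (A : ℕ)

def riders (p : Car k) : Finset M := {m | car m = some p}

def assignmentVec : Finset M → R → ℝ :=
  fun b r => if b ∈ Groups M A then #{c : Fin (k r) | riders car ⟨r, c⟩ = b} else 0

section

omit [Fintype R]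

theorem card_filter_riders_eq_le_one {b : Finset M} (hb : b.Nonempty) (r : R) :
    #{c : Fin (k r) | riders car ⟨r, c⟩ = b} ≤ 1 := by
  refine card_le_one.2 fun c hc c' hc' => ?_
  obtain ⟨m, hm⟩ := hb
  have hmc : m ∈ riders car ⟨r, c⟩ := by rwa [(mem_filter.1 hc).2]
  have hmc' : m ∈ riders car ⟨r, c'⟩ := by rwa [(mem_filter.1 hc').2]
  simp only [riders, mem_filter, mem_univ, true_and] at hmc hmc'
  simpa using hmc.symm.trans hmc'

theorem isBinaryX_assignmentVec : IsBinaryX (assignmentVec car A) := by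
  intro b r
  unfold assignmentVec
  split_ifs with hb
  · have hb1 := card_filter_riders_eq_le_one car (mem_filter.1 hb).2.1 r
    rcases Nat.le_one_iff_eq_zero_or_eq_one.1 hb1 with h | h <;> simp [h]
  · exact Or.inl rfl

theorem sum_mul_assignmentVec {s : Finset (Finset M)} (hs : s ⊆ Groups M A) (φ : Finset M → ℝ)
    (r : R) : ∑ b ∈ s, φ b * assignmentVec car A b r =
      ∑ c : Fin (k r), if riders car ⟨r, c⟩ ∈ s then φ (riders car ⟨r, c⟩) else 0 := by
  calc ∑ b ∈ s, φ b * assignmentVec car A b r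
      = ∑ b ∈ s, ∑ c : Fin (k r), if riders car ⟨r, c⟩ = b then φ b else 0 := by
        refine sum_congr rfl fun b hb => ?_
        rw [assignmentVec, if_pos (hs hb), natCast_card_filter, mul_sum]
        simp only [mul_ite, mul_one, mul_zero]
    _ = _ := by
        rw [sum_comm]
        exact sum_congr rfl fun c _ => sum_ite_eq s _ φ

end

theorem assignmentVec_feasible : LPkFeasible A k (assignmentVec car A) := by
  refine ⟨fun b r => ?_, fun b r hb => if_neg hb, fun m => ?_, fun r => ?_⟩
  · unfold assignmentVec; split_ifs <;> positivity
  · have hsum := fun r => sum_mul_assignmentVec car A (filter_subset (m ∈ ·) _) 1 r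
    simp only [Pi.one_apply, one_mul] at hsum
    calc ∑ r, ∑ b ∈ (Groups M A).filter (m ∈ ·), assignmentVec car A b r
        ≤ ∑ r, ∑ c : Fin (k r), if car m = some ⟨r, c⟩ then 1 else 0 := by
          rw [sum_congr rfl fun r _ => hsum r]
          gcongr with r _ c
          split_ifs with h1 h2 <;> norm_num
          exact h2 (by simpa [riders] using (mem_filter.1 h1).2)
      _ = ∑ p : Car k, if car m = some p then 1 else 0 := by
          rw [Fintype.sum_sigma]
      _ ≤ 1 := by
          rcases car m with _ | p <;> simp
  · have := sum_mul_assignmentVec car A subset_rfl 1 r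
    simp only [Pi.one_apply, one_mul] at this
    rw [this]
    calc _ ≤ ∑ c : Fin (k r), (1 : ℝ) := by gcongr; split_ifs <;> norm_num
      _ = k r := by simp

theorem LPkObj_assignmentVec {V : R → Finset M → ℝ} (hV : ∀ r, V r ∅ = 0)
    (hcap : ∀ p, #(riders car p) ≤ A) :
    LPkObj A V (assignmentVec car A) = ∑ p : Car k, V p.1 (riders car p) := by
  rw [LPkObj, sum_comm, Fintype.sum_sigma]
  refine sum_congr rfl fun r _ => ?_
  rw [sum_mul_assignmentVec car A subset_rfl]
  refine sum_congr rfl fun c _ => ?_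
  split_ifs with h
  · rfl
  · have : riders car ⟨r, c⟩ = ∅ := by
      simpa [Groups, hcap, Finset.not_nonempty_iff_eq_empty] using h
    rw [this, hV]

end CarAssignment

/-- `g j` is what a `(j+1)`-st passenger adds to the in-car cost of a car. -/
def seatWeight (k : R → ℕ) (A : ℕ) (w : M → R → ℝ) (t : R → ℝ) (g : ℕ → ℝ) :
    Matrix M (Seat k A) ℝ :=
  fun m s => w m s.1.1 - t s.1.1 * g s.2

section Spread

variable {k : R → ℕ} {A : ℕ}

variable (k A) in
def groupSpread (b : Finset M) (r : R) : Matrix M (Seat k A) ℝ :=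
  fun m s => if s.1.1 = r ∧ m ∈ b ∧ (s.2 : ℕ) < #b then ((k r : ℝ) * #b)⁻¹ else 0

omit [Fintype M] in
theorem sum_groupSpread_mul {b : Finset M} (hb : #b ≤ A) {r : R} (hk : 0 < k r) (m : M)
    (F : R → ℕ → ℝ) :
    ∑ s, groupSpread k A b r m s * F s.1.1 s.2 =
      if m ∈ b then (#b : ℝ)⁻¹ * ∑ j ∈ range #b, F r j else 0 := by
  have hterm : ∀ (p : Car k) (j : Fin A), groupSpread k A b r m (p, j) * F p.1 j =
      (if p.1 = r then 1 else 0) * ((if m ∈ b then ((k r : ℝ) * #b)⁻¹ else 0) *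
        (if (j : ℕ) < #b then F r j else 0)) := by
    rintro ⟨r', c⟩ j
    simp only [groupSpread]
    by_cases h : r' = r
    · subst h; split_ifs <;> simp_all
    · simp [h]
  rw [Fintype.sum_prod_type]
  simp only [hterm]
  rw [← Fintype.sum_mul_sum, ← mul_sum, sum_car_ite_route_eq, Fin.sum_ite_lt_eq_sum_range hb]
  split_ifs with hm
  · have : (k r : ℝ) ≠ 0 := by exact_mod_cast hk.ne'
    field_simp
  · simp

omit [Fintype R] in
theorem sum_groupSpread_col_le (b : Finset M) (r : R) (s : Seat k A) :
    ∑ m, groupSpread k A b r m s ≤ if s.1.1 = r then (k r : ℝ)⁻¹ else 0 := by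
  obtain ⟨⟨r', c⟩, j⟩ := s
  simp only [groupSpread]
  by_cases h : r' = r ∧ (j : ℕ) < #b
  · obtain ⟨rfl, hj⟩ := h
    have hb : (0 : ℝ) < #b := by exact_mod_cast (by omega : 0 < #b)
    simp only [true_and, hj, and_true, if_true]
    rw [sum_ite_mem, univ_inter, sum_const, nsmul_eq_mul, mul_inv, mul_left_comm,
      mul_inv_cancel₀ hb.ne', mul_one]
  · rw [sum_eq_zero fun m _ => if_neg fun h' => h ⟨h'.1, h'.2.2⟩]
    split_ifs <;> positivity

variable (k A) in
def seatSpread (x : Finset M → R → ℝ) : Matrix M (Seat k A) ℝ :=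
  ∑ b ∈ Groups M A, ∑ r, x b r • groupSpread k A b r

theorem seatSpread_apply (x : Finset M → R → ℝ) (m : M) (s : Seat k A) :
    seatSpread k A x m s = ∑ b ∈ Groups M A, ∑ r, x b r * groupSpread k A b r m s := by
  simp [seatSpread, Matrix.sum_apply]

variable {x : Finset M → R → ℝ} (hk : ∀ r, 0 < k r)

include hk in
theorem sum_seatSpread_mul (m : M) (F : R → ℕ → ℝ) :
    ∑ s, seatSpread k A x m s * F s.1.1 s.2 = ∑ b ∈ Groups M A, ∑ r,
      if m ∈ b then x b r * ((#b : ℝ)⁻¹ * ∑ j ∈ range #b, F r j) else 0 := by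
  simp only [seatSpread_apply, sum_mul]
  rw [sum_comm]
  refine sum_congr rfl fun b hb => ?_
  rw [sum_comm]
  refine sum_congr rfl fun r _ => ?_
  simp only [mul_assoc, ← mul_sum]
  rw [sum_groupSpread_mul (mem_filter.1 hb).2.2 (hk r), mul_ite, mul_zero]

variable (hx : LPkFeasible A k x)

include hx in
theorem seatSpread_nonneg (m : M) (s : Seat k A) : 0 ≤ seatSpread k A x m s := by
  rw [seatSpread_apply]
  refine sum_nonneg fun b _ => sum_nonneg fun r _ => mul_nonneg (hx.1 b r) ?_
  unfold groupSpread; split_ifs <;> positivity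

include hx in
theorem sum_seatSpread_col_le_one (s : Seat k A) : ∑ m, seatSpread k A x m s ≤ 1 := by
  simp only [seatSpread_apply]
  rw [sum_comm]
  calc ∑ b ∈ Groups M A, ∑ m, ∑ r, x b r * groupSpread k A b r m s
      = ∑ b ∈ Groups M A, ∑ r, x b r * ∑ m, groupSpread k A b r m s := by
        simp only [mul_sum]; exact sum_congr rfl fun b _ => sum_comm
    _ ≤ ∑ b ∈ Groups M A, ∑ r, x b r * if s.1.1 = r then (k r : ℝ)⁻¹ else 0 := by
        gcongr with b _ r
        · exact hx.1 b r
        · exact sum_groupSpread_col_le b r s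
    _ = (∑ b ∈ Groups M A, x b s.1.1) * (k s.1.1 : ℝ)⁻¹ := by
        simp [mul_ite, sum_mul]
    _ ≤ (k s.1.1 : ℝ) * (k s.1.1 : ℝ)⁻¹ := by gcongr; exact hx.2.2.2 _
    _ ≤ 1 := by rcases eq_or_ne (k s.1.1 : ℝ) 0 with h | h <;> simp [h]

include hx hk in
theorem sum_seatSpread_row_le_one (m : M) : ∑ s, seatSpread k A x m s ≤ 1 := by
  have h := sum_seatSpread_mul (x := x) (A := A) hk m fun _ _ => 1
  simp only [mul_one, sum_const, card_range, nsmul_eq_mul] at h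
  calc ∑ s, seatSpread k A x m s
      = ∑ b ∈ Groups M A, ∑ r, if m ∈ b then x b r else 0 := by
        rw [h]
        refine sum_congr rfl fun b hb => sum_congr rfl fun r _ => ?_
        have : (#b : ℝ) ≠ 0 := by exact_mod_cast (mem_filter.1 hb).2.1.card_pos.ne'
        rw [inv_mul_cancel₀ this, mul_one]
    _ = ∑ r, ∑ b ∈ (Groups M A).filter (m ∈ ·), x b r := by
        rw [sum_comm]; simp only [sum_filter]
    _ ≤ 1 := hx.2.2.1 m

include hk in
theorem sum_seatSpread_mul_seatWeight (w : M → R → ℝ) (t : R → ℝ) (g : ℕ → ℝ) :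
    ∑ m, ∑ s, seatSpread k A x m s * seatWeight k A w t g m s =
      LPkObj A (groupValue w t g) x := by
  refine (sum_congr rfl fun m _ => sum_seatSpread_mul hk m fun r j => w m r - t r * g j).trans ?_
  rw [LPkObj, sum_comm]
  refine sum_congr rfl fun b hb => ?_
  rw [sum_comm]
  refine sum_congr rfl fun r _ => ?_
  have hb0 : (#b : ℝ) ≠ 0 := by exact_mod_cast (mem_filter.1 hb).2.1.card_pos.ne'
  rw [← sum_filter, filter_mem_eq_inter, univ_inter, ← mul_sum, mul_comm]
  congr 1
  simp only [sum_sub_distrib, sum_const, card_range, nsmul_eq_mul, ← mul_sum, groupValue]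
  field_simp

end Spread

section Seating

variable {k : R → ℕ} {A : ℕ} (f : M ≃. Seat k A)

def carOf (m : M) : Option (Car k) := (f m).map Prod.fst

def seatIndex (m : M) : ℕ := ((f m).map fun s => (s.2 : ℕ)).getD 0

section

omit [DecidableEq M] [Fintype R]

theorem mem_riders_carOf {m : M} {p : Car k} :
    m ∈ riders (carOf f) p ↔ ∃ j, f m = some (p, j) := by
  simp [riders, carOf]

omit [Fintype M] in
theorem seatIndex_eq {m : M} {s : Seat k A} (h : f m = some s) : seatIndex f m = s.2 := by
  simp [seatIndex, h]

theorem injOn_seatIndex (p : Car k) : Set.InjOn (seatIndex f) (riders (carOf f) p) := by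
  intro m hm m' hm' he
  obtain ⟨j, hj⟩ := (mem_riders_carOf f).1 hm
  obtain ⟨j', hj'⟩ := (mem_riders_carOf f).1 hm'
  rw [seatIndex_eq f hj, seatIndex_eq f hj'] at he
  obtain rfl : j = j' := Fin.ext he
  exact f.inj hj hj'

theorem image_seatIndex_subset (p : Car k) :
    (riders (carOf f) p).image (seatIndex f) ⊆ range A := by
  intro i hi
  obtain ⟨m, hm, rfl⟩ := mem_image.1 hi
  obtain ⟨j, hj⟩ := (mem_riders_carOf f).1 hm
  simp [seatIndex_eq f hj]

theorem card_riders_carOf_le (p : Car k) : #(riders (carOf f) p) ≤ A := by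
  rw [← card_image_of_injOn (injOn_seatIndex f p)]
  simpa using card_le_card (image_seatIndex_subset f p)

end

theorem sum_toMatrix_mul_seatWeight (w : M → R → ℝ) (t : R → ℝ) (g : ℕ → ℝ) :
    ∑ m, ∑ s, f.toMatrix m s * seatWeight k A w t g m s =
      ∑ p : Car k, ∑ m ∈ riders (carOf f) p, (w m p.1 - t p.1 * g (seatIndex f m)) := by
  have hrow : ∀ m, ∑ s, f.toMatrix m s * seatWeight k A w t g m s = ∑ p : Car k,
      if m ∈ riders (carOf f) p then w m p.1 - t p.1 * g (seatIndex f m) else 0 := by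
    intro m
    simp only [PEquiv.toMatrix_apply, Option.mem_def, ite_mul, one_mul, zero_mul]
    rcases h : f m with _ | ⟨p, j⟩
    · simp [riders, carOf, h]
    · simp [riders, carOf, h, seatWeight, seatIndex_eq f h, eq_comm]
  rw [sum_congr rfl fun m _ => hrow m, sum_comm]
  simp only [sum_ite_mem, univ_inter]

theorem sum_toMatrix_mul_seatWeight_le (w : M → R → ℝ) {t : R → ℝ} {g : ℕ → ℝ}
    (ht : ∀ r, 0 ≤ t r) (hg : MonotoneOn g (Set.Iio A)) :
    ∑ m, ∑ s, f.toMatrix m s * seatWeight k A w t g m s ≤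
      ∑ p : Car k, groupValue w t g p.1 (riders (carOf f) p) := by
  rw [sum_toMatrix_mul_seatWeight]
  gcongr with p
  exact sum_sub_le_groupValue w (ht p.1) hg (injOn_seatIndex f p) (image_seatIndex_subset f p)

end Seating

theorem lpk_has_binary_optimum_of_homogeneous_general
    (A : ℕ) (α β : M → ℝ) (γ : ℕ → ℝ) (δ : ℝ)
    (hγ1 : γ 1 = 0)
    (hγ0 : ∀ d, 1 ≤ d → d ≤ A → 0 ≤ γ d)
    (hγincr : ∀ d, 2 ≤ d → d < A → γ d - γ (d - 1) ≤ γ (d + 1) - γ d)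
    (t : R → ℝ) (ht : ∀ r, 0 < t r)
    (k : R → ℕ) (hk : ∀ r, 0 < k r) :
    ∃ x, LPkOptimal A (Vhom α β γ δ t) k x ∧ IsBinaryX x := by
  set w : M → R → ℝ := fun m r => α m - β m * t r
  set g := marginalCost γ δ
  rw [Vhom_eq_groupValue]
  have hV : ∀ r, groupValue w t g r ∅ = 0 := by simp [groupValue]
  obtain ⟨car, hcap, hmax⟩ := exists_max_image
    ({car | ∀ p, #(riders car p) ≤ A} : Finset (M → Option (Car k)))
    (fun car => LPkObj A (groupValue w t g) (assignmentVec car A))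
    ⟨fun _ => none, mem_filter.2 ⟨mem_univ _, fun p => by simp [riders]⟩⟩
  refine ⟨assignmentVec car A, ⟨assignmentVec_feasible car A, fun y hy => ?_⟩,
    isBinaryX_assignmentVec car A⟩
  obtain ⟨f, hf⟩ := Matrix.exists_pequiv_sum_mul_le_of_substochastic (seatSpread_nonneg hy)
    (sum_seatSpread_row_le_one hk hy) (sum_seatSpread_col_le_one hy) (seatWeight k A w t g)
  calc LPkObj A (groupValue w t g) y
      = ∑ m, ∑ s, seatSpread k A y m s * seatWeight k A w t g m s :=
        (sum_seatSpread_mul_seatWeight hk w t g).symm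
    _ ≤ ∑ m, ∑ s, f.toMatrix m s * seatWeight k A w t g m s := hf
    _ ≤ ∑ p : Car k, groupValue w t g p.1 (riders (carOf f) p) :=
        sum_toMatrix_mul_seatWeight_le f w (fun r => (ht r).le)
          (monotoneOn_marginalCost hγ1 hγ0 hγincr δ)
    _ = LPkObj A (groupValue w t g) (assignmentVec (carOf f) A) :=
        (LPkObj_assignmentVec _ A hV (card_riders_carOf_le f)).symm
    _ ≤ LPkObj A (groupValue w t g) (assignmentVec car A) :=
        hmax _ (by simpa using card_riders_carOf_le f)

/-- If all riders have homogeneous carpool disutility `γ`, then for any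
finite route set `R*` with travel times `t_r > 0` and positive integer capacities `k*_r` (in
particular the output of the greedy route-capacity allocation), the program (LPk*) has an
optimal solution with all entries in `{0,1}`. -/
theorem lpk_has_binary_optimum_of_homogeneous
    (A : ℕ) (hA : 1 ≤ A) (α β : M → ℝ) (γ : ℕ → ℝ) (δ : ℝ)
    (hγ1 : γ 1 = 0)
    (hγ0 : ∀ d, 1 ≤ d → d ≤ A → 0 ≤ γ d)
    (hγincr : ∀ d, 2 ≤ d → d < A → γ d - γ (d - 1) ≤ γ (d + 1) - γ d)
    (hδ : 0 ≤ δ)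
    (t : R → ℝ) (ht : ∀ r, 0 < t r)
    (k : R → ℕ) (hk : ∀ r, 0 < k r) :
    ∃ x, LPkOptimal A (Vhom α β γ δ t) k x ∧ IsBinaryX x :=
  lpk_has_binary_optimum_of_homogeneous_general A α β γ δ hγ1 hγ0 hγincr t ht k hk
end
end
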